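/- arXiv:2401.09497 — 7 statements merged into one kernel-verified Lean document; each statement's English description precedes it below -/
import Mathlib

section
/- A permutation σ of [k] is weakly consecutive if and only if for every m ∈ [k], the set S_m = {i ∈ [k] : i ≡ σ⁻¹(m) (mod m)} equals the set T_m = {i ∈ [k] : m divides σ(i)}. -/
/-- A permutation `σ` of `[k] = {1,…,k}` is weakly consecutive if for all
`i, j ∈ [k]` and integers `m`, whenever `m ∣ σ i` and `m ∣ (i - j)`, then `m ∣ σ j`. -/
def IsWCS (k : ℕ) (σ : ℕ → ℕ) : Prop :=
  Set.BijOn σ (Set.Icc 1 k) (Set.Icc 1 k) ∧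
  ∀ (m : ℕ) (i j : ℕ), i ∈ Set.Icc 1 k → j ∈ Set.Icc 1 k →
    m ∣ σ i → (m : ℤ) ∣ ((i : ℤ) - (j : ℤ)) → m ∣ σ j

/-!
If `σ` is weakly consecutive and `σ im = m`, the residue class of `im` mod `m` is mapped into
the multiples of `m`, so `S_m ⊆ T_m`. Equality is a count: `σ` is injective, so `T_m` has at most
as many elements as there are multiples of `m` in `[k]`, namely `⌊k/m⌋`, while every residue
class mod `m` in `[k]` has at least `⌊k/m⌋` elements. Conversely, if `m ∣ σ i` then `σ⁻¹(m)`
exists and `i ∈ T_m = S_m`, so the whole class of `i` lies in `T_m`.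
-/

open Finset

lemma Nat.div_le_card_filter_Ioc_modEq (k m v : ℕ) :
    k / m ≤ #{x ∈ Ioc 0 k | x ≡ v [MOD m]} := by
  rcases m.eq_zero_or_pos with rfl | hm
  · simp
  have hcard := Nat.Ioc_filter_modEq_card 0 k hm v
  have hfloor := Int.le_floor_add ((k : ℚ) / m) ((0 - v : ℚ) / m)
  rw [← add_div, add_sub_left_comm, zero_add, Rat.floor_natCast_div_natCast] at hfloor
  rw [Nat.cast_zero] at hcard
  omega

lemma Finset.card_filter_comp_le_of_mapsTo_of_injOn {α β : Type*} {s : Finset α} {t : Finset β}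
    {f : α → β} (hmaps : Set.MapsTo f s t) (hinj : Set.InjOn f s) (p : β → Prop)
    [DecidablePred p] : #{a ∈ s | p (f a)} ≤ #{b ∈ t | p b} := by
  refine card_le_card_of_injOn f (fun a ha => ?_) (hinj.mono (filter_subset _ s))
  simp only [coe_filter, Set.mem_ofPred_eq] at ha ⊢
  exact ⟨hmaps ha.1, ha.2⟩

namespace IsWCS

variable {k m im : ℕ} {σ : ℕ → ℕ}

theorem filter_modEq_eq_filter_dvd (h : IsWCS k σ) (him : im ∈ Icc 1 k) (hσim : σ im = m) :
    {i ∈ Icc 1 k | i ≡ im [MOD m]} = {i ∈ Icc 1 k | m ∣ σ i} := by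
  have hsub : {i ∈ Icc 1 k | i ≡ im [MOD m]} ⊆ {i ∈ Icc 1 k | m ∣ σ i} := by
    intro i hi
    rw [mem_filter] at hi ⊢
    exact ⟨hi.1, h.2 m im i (mem_Icc.1 him) (mem_Icc.1 hi.1) (hσim ▸ dvd_rfl)
      (Nat.modEq_iff_dvd.mp hi.2)⟩
  refine eq_of_subset_of_card_le hsub ?_
  calc #{i ∈ Icc 1 k | m ∣ σ i}
      ≤ #{y ∈ Icc 1 k | m ∣ y} := by
        apply card_filter_comp_le_of_mapsTo_of_injOn <;> rw [coe_Icc]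
        exacts [h.1.mapsTo, h.1.injOn]
    _ = k / m := Icc_add_one_left_eq_Ioc 0 k ▸ Nat.Ioc_filter_dvd_card_eq_div k m
    _ ≤ #{i ∈ Icc 1 k | i ≡ im [MOD m]} :=
      Icc_add_one_left_eq_Ioc 0 k ▸ Nat.div_le_card_filter_Ioc_modEq k m im

theorem of_sep_modEq_eq_sep_dvd (hσ : Set.BijOn σ (Set.Icc 1 k) (Set.Icc 1 k))
    (h : ∀ m im : ℕ, m ∈ Set.Icc 1 k → im ∈ Set.Icc 1 k → σ im = m →
      {i ∈ Set.Icc 1 k | i ≡ im [MOD m]} = {i ∈ Set.Icc 1 k | m ∣ σ i}) :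
    IsWCS k σ := by
  refine ⟨hσ, fun m i j hi hj hmi hij => ?_⟩
  obtain ⟨hσi_pos, hσi_le⟩ := hσ.mapsTo hi
  have hm : m ∈ Set.Icc 1 k :=
    ⟨Nat.pos_of_dvd_of_pos hmi hσi_pos, (Nat.le_of_dvd hσi_pos hmi).trans hσi_le⟩
  obtain ⟨im, him, hσim⟩ := hσ.surjOn hm
  have hslice := Set.ext_iff.1 (h m im hm him hσim)
  have hi_im : i ≡ im [MOD m] := ((hslice i).2 ⟨hi, hmi⟩).2
  exact ((hslice j).1 ⟨hj, (Nat.modEq_iff_dvd.2 hij).trans hi_im⟩).2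

end IsWCS

theorem wcs_iff_slices (k : ℕ) (σ : ℕ → ℕ)
    (hσ : Set.BijOn σ (Set.Icc 1 k) (Set.Icc 1 k)) :
    (∀ (m : ℕ) (i j : ℕ), i ∈ Set.Icc 1 k → j ∈ Set.Icc 1 k →
        m ∣ σ i → (m : ℤ) ∣ ((i : ℤ) - (j : ℤ)) → m ∣ σ j) ↔
    (∀ m im : ℕ, m ∈ Set.Icc 1 k → im ∈ Set.Icc 1 k → σ im = m →
      {i ∈ Set.Icc 1 k | i ≡ im [MOD m]} = {i ∈ Set.Icc 1 k | m ∣ σ i}) := by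
  constructor
  · intro h m im _ him hσim
    have := IsWCS.filter_modEq_eq_filter_dvd ⟨hσ, h⟩ (mem_Icc.2 him) hσim
    ext i
    simpa using Finset.ext_iff.1 this i
  · exact fun h ↦ (IsWCS.of_sep_modEq_eq_sep_dvd hσ h).2
end

section
/- Let σ be a weakly consecutive permutation of [k], and m ∈ [k]. Then σ⁻¹(m) satisfies (k mod m) + 1 ≤ σ⁻¹(m) ≤ k - (k mod m). -/
open Finset

lemma card_le_div_of_injOn_of_dvd {S : Finset ℕ} {f : ℕ → ℕ} {k m : ℕ} (hf : Set.InjOn f S)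
    (hmaps : ∀ x ∈ S, f x ∈ Set.Icc 1 k) (hdvd : ∀ x ∈ S, m ∣ f x) : #S ≤ k / m := by
  rw [← Nat.Ioc_filter_dvd_card_eq_div]
  refine card_le_card_of_injOn f (fun x hx => ?_) hf
  have := hmaps x hx
  simp only [Set.mem_Icc] at this
  rw [mem_coe, mem_filter, mem_Ioc]
  exact ⟨by omega, hdvd x hx⟩

namespace IsWCS

variable {k : ℕ} {σ : ℕ → ℕ}

lemma dvd_of_modEq (hσ : IsWCS k σ) {m i j : ℕ} (hi : i ∈ Set.Icc 1 k) (hj : j ∈ Set.Icc 1 k)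
    (hdvd : m ∣ σ i) (hji : j ≡ i [MOD m]) : m ∣ σ j :=
  hσ.2 m i j hi hj hdvd (Nat.modEq_iff_dvd.mp hji)

lemma card_le_of_modEq (hσ : IsWCS k σ) {i : ℕ} (hi : i ∈ Set.Icc 1 k) {S : Finset ℕ}
    (hS : ∀ j ∈ S, j ∈ Set.Icc 1 k ∧ j ≡ i [MOD σ i]) : #S ≤ k / σ i :=
  card_le_div_of_injOn_of_dvd (hσ.1.injOn.mono fun j hj => (hS j hj).1)
    (fun j hj => hσ.1.mapsTo (hS j hj).1)
    (fun j hj => hσ.dvd_of_modEq hi (hS j hj).1 dvd_rfl (hS j hj).2)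

lemma not_one_le_mod_le_mod (hσ : IsWCS k σ) {i : ℕ} (hi : i ∈ Set.Icc 1 k) :
    ¬ (1 ≤ i % σ i ∧ i % σ i ≤ k % σ i) := by
  rintro ⟨hpos, hle⟩
  set m := σ i
  set a := i % m
  have hm : 0 < m := (hσ.1.mapsTo hi).1
  let S := (range (k / m + 1)).image (a + m * ·)
  have hcard : #S = k / m + 1 :=
    (card_image_of_injective _ ((add_right_injective a).comp (mul_right_injective₀ hm.ne'))).trans
      (card_range _)
  have hS : ∀ j ∈ S, j ∈ Set.Icc 1 k ∧ j ≡ i [MOD m] := by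
    simp only [S, mem_image, mem_range]
    rintro _ ⟨t, ht, rfl⟩
    have hmt : m * t ≤ m * (k / m) := Nat.mul_le_mul_left m (by omega)
    have hk := Nat.div_add_mod k m
    refine ⟨⟨by omega, by omega⟩, ?_⟩
    simp [a, Nat.ModEq, Nat.add_mul_mod_self_left]
  exact (Nat.lt_succ_self _).not_ge (hcard ▸ hσ.card_le_of_modEq hi hS)

end IsWCS

theorem preimage_position (k : ℕ) (σ : ℕ → ℕ) (hσ : IsWCS k σ) (m im : ℕ)
    (hm : m ∈ Set.Icc 1 k) (him : im ∈ Set.Icc 1 k) (hσim : σ im = m) :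
    k % m + 1 ≤ im ∧ im ≤ k - k % m := by
  have key := hσ.not_one_le_mod_le_mod him
  rw [hσim] at key
  have hm0 : 0 < m := hm.1
  obtain ⟨him1, himk⟩ := him
  have hkm := Nat.mod_lt k hm0
  have hk := Nat.div_add_mod' k m
  constructor
  · by_contra! hlow
    rw [Nat.mod_eq_of_lt (by omega)] at key
    exact key ⟨him1, by omega⟩
  · by_contra! hhigh
    have hdiv : im / m = k / m := Nat.div_eq_of_lt_le (by omega) (by rw [add_mul]; omega)
    have hi := Nat.div_add_mod' im m
    rw [hdiv] at hi
    exact key ⟨by omega, by omega⟩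
end

section
/- Let σ be a weakly consecutive permutation of [k], let d ∈ [k], and let ℓ be the least index with d dividing σ(ℓ). Then the map D_d(σ) on [⌊k/d⌋] defined by D_d(σ)(i) = σ(ℓ + (i-1)d)/d is a weakly consecutive permutation of [⌊k/d⌋]. -/
theorem division_slice_is_wcs (k : ℕ) (σ : ℕ → ℕ) (hσ : IsWCS k σ) (d : ℕ)
    (hd : d ∈ Set.Icc 1 k) (ℓ : ℕ) (hℓ : ℓ ∈ Set.Icc 1 k) (hdiv : d ∣ σ ℓ)
    (hleast : ∀ j ∈ Set.Icc 1 k, d ∣ σ j → ℓ ≤ j) :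
    IsWCS (k / d) (fun i => σ (ℓ + (i - 1) * d) / d) := by
  classical
  obtain ⟨⟨hmap, hinj, hsurj⟩, hwcs⟩ := hσ
  obtain ⟨hd1, hdk⟩ := hd
  obtain ⟨hℓ1, hℓk⟩ := hℓ
  set q := k / d with hq
  have hd0 : 0 < d := hd1
  have hq1 : 1 ≤ q := (Nat.one_le_div_iff hd0).mpr hdk
  have hqd : q * d ≤ k := Nat.div_mul_le_self k d
  -- ℓ ≤ d
  have hℓd : ℓ ≤ d := by
    by_contra h
    push_neg at h
    have hj : ℓ - d ∈ Set.Icc 1 k := ⟨by omega, by omega⟩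
    have hdvd : d ∣ σ (ℓ - d) := by
      refine hwcs d ℓ (ℓ - d) ⟨hℓ1, hℓk⟩ hj hdiv ?_
      have : ((ℓ : ℤ) - ((ℓ - d : ℕ) : ℤ)) = d := by
        rw [Nat.cast_sub h.le]; ring
      rw [this]
    have := hleast (ℓ - d) hj hdvd
    omega
  -- the arithmetic progression stays inside [1, k]
  have hin : ∀ t, t < q → ℓ + t * d ≤ k := by
    intro t ht
    have h1 : (t + 1) * d ≤ q * d := Nat.mul_le_mul_right d (by omega)
    rw [add_one_mul] at h1
    linarith
  -- every term of the progression has σ value divisible by d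
  have hprogdvd : ∀ t, t < q → d ∣ σ (ℓ + t * d) := by
    intro t ht
    refine hwcs d ℓ (ℓ + t * d) ⟨hℓ1, hℓk⟩ ⟨by omega, hin t ht⟩ hdiv ⟨-t, ?_⟩
    push_cast
    ring
  -- counting: the set of indices with d ∣ σ j is exactly the progression
  set T : Finset ℕ := (Finset.Icc 1 k).filter (fun j => d ∣ σ j) with hT
  set M : Finset ℕ := (Finset.Icc 1 k).filter (fun j => d ∣ j) with hM
  have hMeq : M = (Finset.Icc 1 q).image (fun i => i * d) := by
    ext j
    simp only [hM, Finset.mem_filter, Finset.mem_Icc, Finset.mem_image]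
    constructor
    · rintro ⟨⟨h1, h2⟩, hdj⟩
      refine ⟨j / d, ⟨(Nat.one_le_div_iff hd0).mpr (Nat.le_of_dvd (by omega) hdj),
        Nat.div_le_div_right h2⟩, Nat.div_mul_cancel hdj⟩
    · rintro ⟨i, ⟨hi1, hi2⟩, rfl⟩
      have : i * d ≤ q * d := Nat.mul_le_mul_right d hi2
      exact ⟨⟨by nlinarith, by linarith⟩, ⟨i, mul_comm i d⟩⟩
  have hMcard : M.card = q := by
    rw [hMeq, Finset.card_image_of_injective _ (fun a b hab => by
      exact Nat.eq_of_mul_eq_mul_right hd0 hab), Nat.card_Icc]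
    omega
  have hTcard : T.card ≤ q := by
    have hmt : ∀ j ∈ T, σ j ∈ M := by
      intro j hj
      simp only [hT, hM, Finset.mem_filter, Finset.mem_Icc] at hj ⊢
      have := hmap (Set.mem_Icc.mpr hj.1)
      exact ⟨Set.mem_Icc.mp this, hwcs d j j (Set.mem_Icc.mpr hj.1)
        (Set.mem_Icc.mpr hj.1) hj.2 (by simp)⟩
    have hit : Set.InjOn σ T := by
      intro a ha b hb hab
      simp only [hT, Finset.coe_filter, Set.mem_setOf_eq, Finset.mem_Icc] at ha hb
      exact hinj (Set.mem_Icc.mpr ha.1) (Set.mem_Icc.mpr hb.1) hab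
    have := Finset.card_le_card_of_injOn σ hmt hit
    omega
  set C : Finset ℕ := (Finset.range q).image (fun t => ℓ + t * d) with hC
  have hCT : C ⊆ T := by
    intro j hj
    simp only [hC, Finset.mem_image, Finset.mem_range] at hj
    obtain ⟨t, ht, rfl⟩ := hj
    simp only [hT, Finset.mem_filter, Finset.mem_Icc]
    exact ⟨⟨by omega, hin t ht⟩, hprogdvd t ht⟩
  have hCcard : C.card = q := by
    rw [hC, Finset.card_image_of_injective _ (fun a b hab => by
      have : a * d = b * d := by omega
      exact Nat.eq_of_mul_eq_mul_right hd0 this), Finset.card_range]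
  have hTC : T = C := (Finset.eq_of_subset_of_card_le hCT (by omega)).symm
  have hkey : ∀ j, 1 ≤ j → j ≤ k → d ∣ σ j → ∃ t, t < q ∧ j = ℓ + t * d := by
    intro j h1 h2 hdj
    have : j ∈ T := by
      simp only [hT, Finset.mem_filter, Finset.mem_Icc]; exact ⟨⟨h1, h2⟩, hdj⟩
    rw [hTC] at this
    simp only [hC, Finset.mem_image, Finset.mem_range] at this
    obtain ⟨t, ht, h⟩ := this
    exact ⟨t, ht, h.symm⟩
  -- membership / divisibility facts for indices i ∈ [1, q]
  have hidx : ∀ i, 1 ≤ i → i ≤ q → (ℓ + (i - 1) * d) ∈ Set.Icc 1 k ∧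
      d ∣ σ (ℓ + (i - 1) * d) := by
    intro i h1 h2
    have ht : i - 1 < q := by omega
    exact ⟨⟨by omega, hin _ ht⟩, hprogdvd _ ht⟩
  constructor
  · refine ⟨?_, ?_, ?_⟩
    · -- MapsTo
      rintro i ⟨hi1, hi2⟩
      obtain ⟨hmem, hdvd⟩ := hidx i hi1 hi2
      have hσmem := hmap hmem
      obtain ⟨hs1, hs2⟩ := Set.mem_Icc.mp hσmem
      exact Set.mem_Icc.mpr ⟨(Nat.one_le_div_iff hd0).mpr (Nat.le_of_dvd (by omega) hdvd),
        Nat.div_le_div_right hs2⟩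
    · -- InjOn
      rintro i ⟨hi1, hi2⟩ j ⟨hj1, hj2⟩ hij
      simp only at hij
      obtain ⟨hmi, hdi⟩ := hidx i hi1 hi2
      obtain ⟨hmj, hdj⟩ := hidx j hj1 hj2
      have : σ (ℓ + (i - 1) * d) = σ (ℓ + (j - 1) * d) := by
        rw [← Nat.div_mul_cancel hdi, ← Nat.div_mul_cancel hdj, hij]
      have h := hinj hmi hmj this
      have : (i - 1) * d = (j - 1) * d := by omega
      have := Nat.eq_of_mul_eq_mul_right hd0 this
      omega
    · -- SurjOn
      rintro n ⟨hn1, hn2⟩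
      have hdn : d * n ∈ Set.Icc 1 k := by
        have : d * n ≤ d * q := Nat.mul_le_mul_left d hn2
        refine Set.mem_Icc.mpr ⟨by nlinarith, by nlinarith [hqd]⟩
      obtain ⟨j, hjmem, hjeq⟩ := hsurj hdn
      obtain ⟨hj1, hj2⟩ := Set.mem_Icc.mp hjmem
      obtain ⟨t, ht, rfl⟩ := hkey j hj1 hj2 (hjeq ▸ Dvd.intro n rfl)
      refine ⟨t + 1, Set.mem_Icc.mpr ⟨by omega, by omega⟩, ?_⟩
      simp only [Nat.add_sub_cancel]
      rw [hjeq, Nat.mul_div_cancel_left n hd0]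
  · -- WCS condition
    rintro m i j ⟨hi1, hi2⟩ ⟨hj1, hj2⟩ hmd hdiff
    obtain ⟨hmi, hdi⟩ := hidx i hi1 hi2
    obtain ⟨hmj, hdj⟩ := hidx j hj1 hj2
    simp only at hmd ⊢
    have hmd' : (m * d) ∣ σ (ℓ + (i - 1) * d) := by
      rw [← Nat.div_mul_cancel hdi]
      exact mul_dvd_mul hmd dvd_rfl
    have hdiff' : ((m * d : ℕ) : ℤ) ∣ ((ℓ + (i - 1) * d : ℕ) : ℤ) -
        ((ℓ + (j - 1) * d : ℕ) : ℤ) := by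
      obtain ⟨c, hc⟩ := hdiff
      refine ⟨c, ?_⟩
      push_cast [Nat.cast_sub hi1, Nat.cast_sub hj1]
      have : ((i : ℤ) - 1) * d - ((j : ℤ) - 1) * d = ((i : ℤ) - j) * d := by ring
      rw [add_sub_add_left_eq_sub, this, hc]
      ring
    have := hwcs (m * d) _ _ hmi hmj hmd' hdiff'
    obtain ⟨c, hc⟩ := this
    refine ⟨c, ?_⟩
    have : σ (ℓ + (j - 1) * d) / d * d = m * c * d := by
      rw [Nat.div_mul_cancel hdj, hc]; ring
    exact Nat.eq_of_mul_eq_mul_right hd0 this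
end

section
/- Let p and p + 2 both be prime and k = 2p. Then the permutation σ of [k] that swaps 2 with 2p, swaps p with p+2 (i.e., σ(2) = 2p, σ(2p) = 2, σ(p) = p+2, σ(p+2) = p), and fixes all other elements, is weakly consecutive. -/
lemma nat_dvd_of_int {m n : ℕ} (h : (m:ℤ) ∣ (n:ℤ)) : m ∣ n := Int.natCast_dvd_natCast.mp h

lemma dvd_combo {m a b c : ℤ} (h1 : m ∣ a) (h2 : m ∣ b) (u v : ℤ) (h : c = u*a + v*b) :
    m ∣ c := by subst h; exact dvd_add (h1.mul_left u) (h2.mul_left v)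

lemma eq_zero_of_dvd_small {q a : ℤ} (h : q ∣ a) (h1 : -q < a) (h2 : a < q) : a = 0 := by
  by_contra ha
  have h3 : q ≤ |a| := Int.le_of_dvd (abs_pos.mpr ha) ((dvd_abs q a).mpr h)
  have h4 : |a| < q := abs_lt.mpr ⟨h1, h2⟩
  omega

lemma dvd_two_mul_prime {p m : ℕ} (hp : p.Prime) (h : m ∣ 2 * p) :
    m = 1 ∨ m = 2 ∨ m = p ∨ m = 2 * p := by
  by_cases hpm : p ∣ m
  · obtain ⟨t, rfl⟩ := hpm
    have ht : t ∣ 2 := by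
      have h' : p * t ∣ p * 2 := by rwa [mul_comm 2 p] at h
      exact (Nat.mul_dvd_mul_iff_left hp.pos).mp h'
    have ht2 : t ≤ 2 := Nat.le_of_dvd (by norm_num) ht
    interval_cases t
    · simp at ht
    · right; right; left; omega
    · right; right; right; omega
  · have hc : Nat.Coprime m p := ((Nat.Prime.coprime_iff_not_dvd hp).mpr hpm).symm
    have h2 : m ∣ 2 := hc.dvd_of_dvd_mul_right h
    rcases (Nat.dvd_prime Nat.prime_two).mp h2 with h | h
    · exact Or.inl h
    · exact Or.inr (Or.inl h)

lemma nat_mult_range {p i : ℕ} (hp3 : 3 ≤ p) (h : p ∣ i) (h1 : 1 ≤ i) (h2 : i ≤ 2*p) :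
    i = p ∨ i = 2*p := by
  obtain ⟨t, rfl⟩ := h
  have ht1 : t ≠ 0 := by rintro rfl; simp at h1
  have ht2 : t ≤ 2 := by
    by_contra h'
    push_neg at h'
    have h3 : p * 3 ≤ p * t := mul_le_mul_right (by omega) p
    linarith
  interval_cases t <;> omega

lemma nat_mult_pin {q i : ℕ} (h : q ∣ i) (h1 : 1 ≤ i) (h2 : i < 2*q) : i = q := by
  obtain ⟨t, rfl⟩ := h
  have ht1 : t ≠ 0 := by rintro rfl; simp at h1
  have ht2 : t < 2 := by
    by_contra h'
    push_neg at h'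
    have h3 : q * 2 ≤ q * t := mul_le_mul_right h' q
    linarith
  have : t = 1 := by omega
  subst this; omega

theorem twice_twin_prime_is_wcs (p : ℕ) (hp : p.Prime) (hp2 : (p + 2).Prime) :
    IsWCS (2 * p) (fun i =>
      if i = 2 then 2 * p else if i = 2 * p then 2
      else if i = p then p + 2 else if i = p + 2 then p else i) := by
  have hpne2 : p ≠ 2 := by rintro rfl; exact absurd hp2 (by decide)
  have hp3 : 3 ≤ p := by have := hp.two_le; omega
  have hpodd : p % 2 = 1 := by rcases hp.eq_two_or_odd with h | h <;> omega
  constructor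
  · -- bijectivity
    have hmap : Set.MapsTo (fun i =>
        if i = 2 then 2 * p else if i = 2 * p then 2
        else if i = p then p + 2 else if i = p + 2 then p else i)
        (Set.Icc 1 (2*p)) (Set.Icc 1 (2*p)) := by
      intro x hx
      simp only [Set.mem_Icc] at hx ⊢
      split_ifs <;> omega
    have hinv : Set.LeftInvOn (fun i =>
        if i = 2 then 2 * p else if i = 2 * p then 2
        else if i = p then p + 2 else if i = p + 2 then p else i)
        (fun i =>
        if i = 2 then 2 * p else if i = 2 * p then 2
        else if i = p then p + 2 else if i = p + 2 then p else i)
        (Set.Icc 1 (2*p)) := by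
      intro x hx
      simp only [Set.mem_Icc] at hx
      simp only
      split_ifs <;> omega
    exact Set.InvOn.bijOn ⟨hinv, hinv⟩ hmap hmap
  · intro m i j hi hj hdi hdz
    simp only [Set.mem_Icc] at hi hj
    simp only at hdi ⊢
    by_cases hj1 : j = 2
    · subst hj1
      rw [if_pos rfl]
      by_cases hi1 : i = 2
      · subst hi1; rwa [if_pos rfl] at hdi
      rw [if_neg hi1] at hdi
      by_cases hi2 : i = 2 * p
      · subst hi2; rw [if_pos rfl] at hdi
        exact hdi.trans (dvd_mul_right 2 p)
      rw [if_neg hi2] at hdi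
      by_cases hi3 : i = p
      · subst i; rw [if_pos rfl] at hdi
        rcases (Nat.dvd_prime hp2).mp hdi with rfl | rfl
        · exact one_dvd _
        · exfalso
          have h2 := Int.le_of_dvd (by omega) hdz
          omega
      rw [if_neg hi3] at hdi
      by_cases hi4 : i = p + 2
      · subst hi4; rw [if_pos rfl] at hdi
        exact hdi.trans (dvd_mul_left p 2)
      rw [if_neg hi4] at hdi
      have h2 : m ∣ 2 := nat_dvd_of_int
        (dvd_combo (Int.natCast_dvd_natCast.mpr hdi) hdz 1 (-1) (by push_cast; ring))
      exact h2.trans (dvd_mul_right 2 p)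
    rw [if_neg hj1]
    by_cases hj2 : j = 2 * p
    · subst hj2
      rw [if_pos rfl]
      by_cases hi1 : i = 2
      · subst hi1; rw [if_pos rfl] at hdi
        exact nat_dvd_of_int
          (dvd_combo (Int.natCast_dvd_natCast.mpr hdi) hdz 1 1 (by push_cast; ring))
      rw [if_neg hi1] at hdi
      by_cases hi2 : i = 2 * p
      · subst hi2; rwa [if_pos rfl] at hdi
      rw [if_neg hi2] at hdi
      by_cases hi3 : i = p
      · subst i; rw [if_pos rfl] at hdi
        exact nat_dvd_of_int
          (dvd_combo (Int.natCast_dvd_natCast.mpr hdi) hdz 1 1 (by push_cast; ring))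
      rw [if_neg hi3] at hdi
      by_cases hi4 : i = p + 2
      · subst hi4; rw [if_pos rfl] at hdi
        exact nat_dvd_of_int
          (dvd_combo (Int.natCast_dvd_natCast.mpr hdi) hdz 1 1 (by push_cast; ring))
      rw [if_neg hi4] at hdi
      have h2p : m ∣ 2 * p := nat_dvd_of_int
        (dvd_combo (Int.natCast_dvd_natCast.mpr hdi) hdz 1 (-1) (by push_cast; ring))
      rcases dvd_two_mul_prime hp h2p with rfl | rfl | hm | rfl
      · exact one_dvd _
      · exact dvd_refl 2
      · subst m
        exfalso
        rcases nat_mult_range hp3 hdi hi.1 hi.2 with rfl | h'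
        · exact hi3 rfl
        · exact hi2 h'
      · exfalso
        have := nat_mult_pin hdi hi.1 (by omega)
        exact hi2 this
    rw [if_neg hj2]
    by_cases hj3 : j = p
    · subst j
      rw [if_pos rfl]
      by_cases hi1 : i = 2
      · subst hi1; rw [if_pos rfl] at hdi
        rcases dvd_two_mul_prime hp hdi with rfl | rfl | hm | rfl
        · exact one_dvd _
        · exfalso; omega
        · subst m
          exfalso
          have h4 : (p:ℤ) ∣ 2 := dvd_combo hdz (dvd_refl (p:ℤ)) 1 1 (by push_cast; ring)
          have := Int.le_of_dvd (by norm_num) h4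
          omega
        · exfalso
          have h4 : ((2*p:ℕ):ℤ) ∣ (p:ℤ) - 2 := dvd_combo hdz hdz (-1) 0 (by push_cast; ring)
          have := Int.le_of_dvd (by omega) h4
          omega
      rw [if_neg hi1] at hdi
      by_cases hi2 : i = 2 * p
      · subst hi2; rw [if_pos rfl] at hdi
        have h4 : m ∣ p := nat_dvd_of_int (dvd_combo hdz hdz 1 0 (by push_cast; ring))
        rcases (Nat.dvd_prime hp).mp h4 with rfl | hm
        · exact one_dvd _
        · subst m
          exfalso
          have := Nat.le_of_dvd (by norm_num) hdi
          omega
      rw [if_neg hi2] at hdi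
      by_cases hi3 : i = p
      · subst i; rwa [if_pos rfl] at hdi
      rw [if_neg hi3] at hdi
      by_cases hi4 : i = p + 2
      · subst hi4; rw [if_pos rfl] at hdi
        rcases (Nat.dvd_prime hp).mp hdi with rfl | hm
        · exact one_dvd _
        · subst m
          exfalso
          have h4 : (p:ℤ) ∣ 2 := dvd_combo hdz hdz 1 0 (by push_cast; ring)
          have := Int.le_of_dvd (by norm_num) h4
          omega
      rw [if_neg hi4] at hdi
      have h4 : m ∣ p := nat_dvd_of_int
        (dvd_combo (Int.natCast_dvd_natCast.mpr hdi) hdz 1 (-1) (by ring))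
      rcases (Nat.dvd_prime hp).mp h4 with rfl | hm
      · exact one_dvd _
      · subst m
        exfalso
        rcases nat_mult_range hp3 hdi hi.1 hi.2 with rfl | h'
        · exact hi3 rfl
        · exact hi2 h'
    rw [if_neg hj3]
    by_cases hj4 : j = p + 2
    · subst hj4
      rw [if_pos rfl]
      by_cases hi1 : i = 2
      · subst hi1; rw [if_pos rfl] at hdi
        exact nat_dvd_of_int (dvd_combo hdz hdz (-1) 0 (by push_cast; ring))
      rw [if_neg hi1] at hdi
      by_cases hi2 : i = 2 * p
      · subst hi2; rw [if_pos rfl] at hdi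
        rcases (Nat.dvd_prime Nat.prime_two).mp hdi with rfl | rfl
        · exact one_dvd _
        · exfalso; omega
      rw [if_neg hi2] at hdi
      by_cases hi3 : i = p
      · subst i; rw [if_pos rfl] at hdi
        rcases (Nat.dvd_prime hp2).mp hdi with rfl | rfl
        · exact one_dvd _
        · exfalso
          have h4 : ((p+2:ℕ):ℤ) ∣ 2 := dvd_combo hdz hdz (-1) 0 (by push_cast; ring)
          have := Int.le_of_dvd (by norm_num) h4
          omega
      rw [if_neg hi3] at hdi
      by_cases hi4 : i = p + 2
      · subst hi4; rwa [if_pos rfl] at hdi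
      rw [if_neg hi4] at hdi
      have h4 : m ∣ p + 2 := nat_dvd_of_int
        (dvd_combo (Int.natCast_dvd_natCast.mpr hdi) hdz 1 (-1) (by push_cast; ring))
      rcases (Nat.dvd_prime hp2).mp h4 with rfl | rfl
      · exact one_dvd _
      · exfalso
        have := nat_mult_pin hdi hi.1 (by omega)
        exact hi4 this
    rw [if_neg hj4]
    -- goal : m ∣ j
    by_cases hi1 : i = 2
    · subst hi1; rw [if_pos rfl] at hdi
      rcases dvd_two_mul_prime hp hdi with rfl | rfl | hm | rfl
      · exact one_dvd _
      · exact nat_dvd_of_int (dvd_combo (dvd_refl ((2:ℕ):ℤ)) hdz 1 (-1) (by push_cast; ring))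
      · subst m
        exfalso
        rcases le_or_gt j (p+1) with h' | h'
        · have h0 := eq_zero_of_dvd_small hdz (by omega) (by omega)
          omega
        · have h0 := eq_zero_of_dvd_small
            (dvd_combo (c := 2 - (j:ℤ) + (p:ℤ)) hdz (dvd_refl (p:ℤ)) 1 1
              (by push_cast; ring)) (by omega) (by omega)
          omega
      · exfalso
        have h0 := eq_zero_of_dvd_small hdz (by omega) (by omega)
        omega
    rw [if_neg hi1] at hdi
    by_cases hi2 : i = 2 * p
    · subst hi2; rw [if_pos rfl] at hdi
      exact nat_dvd_of_int
        (dvd_combo (Int.natCast_dvd_natCast.mpr hdi) hdz (p:ℤ) (-1) (by push_cast; ring))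
    rw [if_neg hi2] at hdi
    by_cases hi3 : i = p
    · subst i; rw [if_pos rfl] at hdi
      rcases (Nat.dvd_prime hp2).mp hdi with rfl | rfl
      · exact one_dvd _
      · exfalso
        have h0 := eq_zero_of_dvd_small hdz (by omega) (by omega)
        omega
    rw [if_neg hi3] at hdi
    by_cases hi4 : i = p + 2
    · subst hi4; rw [if_pos rfl] at hdi
      rcases (Nat.dvd_prime hp).mp hdi with rfl | hm
      · exact one_dvd _
      · subst m
        exfalso
        rcases le_or_gt j (p+1) with h' | h'
        · have h0 := eq_zero_of_dvd_small
            (dvd_combo (c := 2 - (j:ℤ)) hdz (dvd_refl (p:ℤ)) 1 (-1)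
              (by push_cast; ring)) (by omega) (by omega)
          omega
        · have h0 := eq_zero_of_dvd_small hdz (by omega) (by omega)
          omega
    rw [if_neg hi4] at hdi
    exact nat_dvd_of_int
      (dvd_combo (Int.natCast_dvd_natCast.mpr hdi) hdz 1 (-1) (by ring))
end

section
/- Let p and p + 2 both be prime and k = 2p + 1. Then the permutation σ of [k] with σ(2) = 2p, σ(2p) = 2, σ(p) = p+2, σ(p+2) = p, and σ(i) = i otherwise, is weakly consecutive. -/
/-!
`σ` is the product of the disjoint transpositions `(2 2p)` and `(p p+2)`. For a modulus `m`
other than `p`, `2p`, `p+2`, primality of `p` and `p+2` gives `m ∣ 2 ↔ m ∣ 2p` and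
`m ∣ p ↔ m ∣ p+2`, so `m ∣ σ i ↔ m ∣ i`. For `m ∈ {p, 2p, p+2}` the interval `[1, 2p+1]` is short:
the indices `i` with `m ∣ σ i` are `{2, p+2}`, `{2}`, `{p}` respectively, each a whole residue class
mod `m` inside `[1, 2p+1]`.
-/

open Set Equiv

theorem IsWCS.of_forall_exists_dvd_iff {k : ℕ} {σ : ℕ → ℕ} (hσ : BijOn σ (Icc 1 k) (Icc 1 k))
    (h : ∀ m : ℕ, ∃ a : ℤ, ∀ i ∈ Icc 1 k, m ∣ σ i ↔ (m : ℤ) ∣ i - a) : IsWCS k σ := by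
  refine ⟨hσ, fun m i j hi hj hmi hij => ?_⟩
  obtain ⟨a, ha⟩ := h m
  refine (ha j hj).2 ?_
  simpa using dvd_sub ((ha i hi).1 hmi) hij

theorem Equiv.swap_apply_mem_iff {α : Type*} [DecidableEq α] {s : Set α} {a b : α}
    (h : a ∈ s ↔ b ∈ s) (x : α) : swap a b x ∈ s ↔ x ∈ s := by
  rcases eq_or_ne x a with rfl | hxa
  · simpa using h.symm
  rcases eq_or_ne x b with rfl | hxb
  · simpa using h
  rw [swap_apply_of_ne_of_ne hxa hxb]

theorem Int.dvd_sub_iff_eq_or_eq_add {m a x : ℤ} (hlo : a - m < x) (hhi : x < a + 2 * m) :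
    m ∣ x - a ↔ x = a ∨ x = a + m := by
  refine ⟨fun ⟨t, ht⟩ => ?_, by rintro (rfl | rfl) <;> simp⟩
  have ht0 : 0 ≤ t := by nlinarith
  have ht1 : t ≤ 1 := by nlinarith
  interval_cases t <;> [left; right] <;> linarith

theorem Nat.Prime.dvd_iff_dvd_of_ne {p q m : ℕ} (hp : p.Prime) (hq : q.Prime) (hmp : m ≠ p)
    (hmq : m ≠ q) : m ∣ p ↔ m ∣ q := by
  rw [Nat.dvd_prime hp, Nat.dvd_prime hq]
  simp [hmp, hmq]

theorem Nat.Prime.dvd_mul_iff_dvd_of_ne {p q m : ℕ} (hp : p.Prime) (hq : q.Prime) (hmp : m ≠ p)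
    (hmqp : m ≠ q * p) : m ∣ q * p ↔ m ∣ q := by
  refine ⟨fun h => ?_, fun h => dvd_mul_of_dvd_left h p⟩
  obtain ⟨a, b, ha, hb, rfl⟩ := Nat.dvd_mul.1 h
  rcases (Nat.dvd_prime hp).1 hb with rfl | rfl
  · simpa using ha
  · rcases (Nat.dvd_prime hq).1 ha with rfl | rfl <;> simp_all

theorem three_le_of_twin_primes {p : ℕ} (hp : p.Prime) (hp2 : (p + 2).Prime) : 3 ≤ p := by
  have : p ≠ 2 := by rintro rfl; norm_num at hp2
  have := hp.two_le
  omega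

def twinSwap (p : ℕ) : Perm ℕ := swap 2 (2 * p) * swap p (p + 2)

theorem twinSwap_apply {p : ℕ} (hp : 3 ≤ p) (i : ℕ) :
    twinSwap p i = if i = 2 then 2 * p else if i = 2 * p then 2
      else if i = p then p + 2 else if i = p + 2 then p else i := by
  simp only [twinSwap, Perm.mul_apply, swap_apply_def]
  split_ifs <;> omega

theorem mapsTo_twinSwap {p : ℕ} (hp : 3 ≤ p) :
    MapsTo (twinSwap p) (Icc 1 (2 * p + 1)) (Icc 1 (2 * p + 1)) := fun i hi => by
  simp only [twinSwap, Perm.mul_apply]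
  rw [swap_apply_mem_iff (by simp only [mem_Icc]; omega),
    swap_apply_mem_iff (by simp only [mem_Icc]; omega)]
  exact hi

theorem dvd_twinSwap_apply_iff {p m : ℕ} (hp : p.Prime) (hp2 : (p + 2).Prime) (hmp : m ≠ p)
    (hm2p : m ≠ 2 * p) (hmp2 : m ≠ p + 2) (i : ℕ) : m ∣ twinSwap p i ↔ m ∣ i :=
  (swap_apply_mem_iff (s := {n | m ∣ n})
    (hp.dvd_mul_iff_dvd_of_ne Nat.prime_two hmp hm2p).symm _).trans
    (swap_apply_mem_iff (s := {n | m ∣ n}) (hp.dvd_iff_dvd_of_ne hp2 hmp hmp2) i)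

theorem isWCS_twinSwap {p : ℕ} (hp : p.Prime) (hp2 : (p + 2).Prime) :
    IsWCS (2 * p + 1) (twinSwap p) := by
  have hp3 := three_le_of_twin_primes hp hp2
  have hmaps := mapsTo_twinSwap hp3
  refine .of_forall_exists_dvd_iff
    (((finite_Icc _ _).injOn_iff_bijOn_of_mapsTo hmaps).1 (twinSwap p).injective.injOn)
    fun m => ?_
  by_cases hm : m = p ∨ m = 2 * p ∨ m = p + 2
  · obtain ⟨a, hma⟩ : ∃ a : ℤ, m = p ∧ a = 2 ∨ m = 2 * p ∧ a = 2 ∨ m = p + 2 ∧ a = p := by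
      rcases hm with h | h | h
      exacts [⟨2, by omega⟩, ⟨2, by omega⟩, ⟨p, by omega⟩]
    refine ⟨a, fun i hi => ?_⟩
    have hσi := hmaps hi
    simp only [mem_Icc] at hi hσi
    rw [← Int.natCast_dvd_natCast, ← dvd_sub_self_right,
      Int.dvd_sub_iff_eq_or_eq_add (by omega) (by omega),
      Int.dvd_sub_iff_eq_or_eq_add (by omega) (by omega)]
    rw [twinSwap_apply hp3] at hσi ⊢
    split_ifs at hσi ⊢ <;> omega
  · push Not at hm
    obtain ⟨hmp, hm2p, hmp2⟩ := hm
    refine ⟨0, fun i _ => ?_⟩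
    rw [sub_zero, Int.natCast_dvd_natCast]
    exact dvd_twinSwap_apply_iff hp hp2 hmp hm2p hmp2 i

theorem twice_twin_prime_plus_one_is_wcs (p : ℕ) (hp : p.Prime) (hp2 : (p + 2).Prime) :
    IsWCS (2 * p + 1) (fun i =>
      if i = 2 then 2 * p else if i = 2 * p then 2
      else if i = p then p + 2 else if i = p + 2 then p else i) := by
  have hσ : (fun i => if i = 2 then 2 * p else if i = 2 * p then 2
      else if i = p then p + 2 else if i = p + 2 then p else i) = twinSwap p :=
    funext fun i => (twinSwap_apply (three_le_of_twin_primes hp hp2) i).symm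
  rw [hσ]
  exact isWCS_twinSwap hp hp2
end

section
/- Let σ be a weakly consecutive permutation of [k], let p be prime and c ≥ 1 an integer with p^c ≤ k < p^c + p^(c-1). Then the permutation obtained from σ by swapping the positions of the values p^c and p^(c-1) (i.e., π(i) = p^c if σ(i) = p^(c-1), π(i) = p^(c-1) if σ(i) = p^c, and π(i) = σ(i) otherwise) is weakly consecutive. -/
open Finset

theorem Nat.dvd_pow_or_eq_of_dvd_pow_succ {p c m : ℕ} (hp : p.Prime) (hm : m ∣ p ^ (c + 1)) :
    m ∣ p ^ c ∨ m = p ^ (c + 1) := by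
  obtain ⟨t, ht, rfl⟩ := (Nat.dvd_prime_pow hp).1 hm
  rcases ht.lt_or_eq with h | rfl
  · exact .inl (pow_dvd_pow p (Nat.lt_succ_iff.1 h))
  · exact .inr rfl

namespace IsWCS

variable {k q : ℕ} {σ : ℕ → ℕ}

theorem card_le_div (hσ : IsWCS k σ) {S : Finset ℕ} (hS : ↑S ⊆ Set.Icc 1 k)
    (hdvd : ∀ j ∈ S, q ∣ σ j) : #S ≤ k / q := by
  rw [← Nat.Ioc_filter_dvd_card_eq_div]
  refine card_le_card_of_injOn σ (fun j hj => ?_) (hσ.1.injOn.mono hS)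
  have := hσ.1.mapsTo (hS hj)
  simp only [Set.mem_Icc, coe_filter, mem_Ioc, Set.mem_ofPred_eq] at this ⊢
  exact ⟨this, hdvd j hj⟩

theorem not_dvd_of_dvd_sub_of_add_mul_le {n a i : ℕ} (hσ : IsWCS k σ) (hk : k < (n + 1) * q)
    (ha : 1 ≤ a) (han : a + n * q ≤ k) (hi : i ∈ Set.Icc 1 k) (hia : (q : ℤ) ∣ i - a) :
    ¬ q ∣ σ i := by
  intro hqi
  have hq : 0 < q := Nat.pos_of_ne_zero (by rintro rfl; simp at hk)
  set S := (range (n + 1)).image (fun s => a + s * q)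
  have hS : ↑S ⊆ Set.Icc 1 k := by
    simp only [S, coe_image, coe_range, Set.image_subset_iff]
    intro s hs
    have : s * q ≤ n * q := Nat.mul_le_mul_right q (Nat.lt_succ_iff.1 hs)
    simp only [Set.mem_preimage, Set.mem_Icc]
    omega
  have hcard : #S = n + 1 := by
    rw [card_image_of_injective _ fun s t hst => Nat.eq_of_mul_eq_mul_right hq
      (Nat.add_left_cancel hst), card_range]
  have hdvd : ∀ j ∈ S, q ∣ σ j := by
    intro j hj
    obtain ⟨s, -, rfl⟩ := mem_image.1 hj
    refine hσ.2 q i _ hi (hS hj) hqi ?_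
    have : (i : ℤ) - ((a + s * q : ℕ) : ℤ) = (i - a) - s * q := by push_cast; ring
    rw [this]
    exact dvd_sub hia (dvd_mul_left _ _)
  have := hσ.card_le_div hS hdvd
  have := Nat.div_lt_of_lt_mul (by rwa [mul_comm] at hk : k < q * (n + 1))
  omega

theorem eq_of_dvd_sub {n i j : ℕ} (hσ : IsWCS k σ) (hk : k < (n + 1) * q)
    (hi : i ∈ Set.Icc 1 k) (hj : j ∈ Set.Icc 1 k) (hqi : q ∣ σ i)
    (hij : ((n * q : ℕ) : ℤ) ∣ i - j) : i = j := by
  push_cast at hij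
  have := hi.2
  have := hj.2
  by_contra hne
  rcases Nat.lt_or_gt_of_ne hne with h | h
  · have := Int.le_of_dvd (by omega) (dvd_sub_comm.1 hij)
    exact hσ.not_dvd_of_dvd_sub_of_add_mul_le hk hi.1 (by omega) hi (by simp) hqi
  · have := Int.le_of_dvd (by omega) hij
    refine hσ.not_dvd_of_dvd_sub_of_add_mul_le hk hj.1 (by omega) hi ?_ hqi
    exact (dvd_mul_left _ _).trans hij

theorem swap_prime_pow {p d : ℕ} (hσ : IsWCS k σ) (hp : p.Prime)
    (hlow : p ^ (d + 1) ≤ k) (hhigh : k < p ^ (d + 1) + p ^ d) :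
    IsWCS k (Equiv.swap (p ^ d) (p ^ (d + 1)) ∘ σ) := by
  set q := p ^ d
  set P := p ^ (d + 1)
  have hPq : P = p * q := pow_succ' p d
  have hqP : q ∣ P := Dvd.intro_left p hPq.symm
  have hq : 0 < q := pow_pos hp.pos d
  have hq_lt : q < P := Nat.pow_lt_pow_right hp.one_lt d.lt_succ_self
  have hk : k < (p + 1) * q := by rwa [add_mul, one_mul, ← hPq]
  have eq_P : ∀ x ∈ Set.Icc 1 k, P ∣ x → x = P := fun x hx hPx =>
    Nat.eq_of_dvd_of_lt_two_mul (by have := hx.1; omega) hPx (by have := hx.2; omega)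
  have hmem : q ∈ Set.Icc 1 k ↔ P ∈ Set.Icc 1 k :=
    iff_of_true ⟨hq, hq_lt.le.trans hlow⟩ ⟨hq.trans hq_lt, hlow⟩
  refine ⟨(Equiv.swap_bijOn_self hmem).comp hσ.1, fun m i j hi hj hmi hij => ?_⟩
  simp only [Function.comp_apply] at hmi ⊢
  by_cases hm : m ∣ σ i
  · have hmj := hσ.2 m i j hi hj hm hij
    by_cases hjq : σ j = q
    · rw [hjq, Equiv.swap_apply_left]
      exact (hjq ▸ hmj).trans hqP
    by_cases hjP : σ j = P
    · rw [hjP, Equiv.swap_apply_right]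
      rcases Nat.dvd_pow_or_eq_of_dvd_pow_succ hp (hjP ▸ hmj) with h | rfl
      · exact h
      rw [eq_P _ (hσ.1.mapsTo hi) hm, Equiv.swap_apply_right] at hmi
      exact absurd (Nat.le_of_dvd hq hmi) hq_lt.not_ge
    rwa [Equiv.swap_apply_of_ne_of_ne hjq hjP]
  by_cases hiq : σ i = q
  · have hmP := hmi
    rw [hiq, Equiv.swap_apply_left] at hmP
    rcases Nat.dvd_pow_or_eq_of_dvd_pow_succ hp hmP with h | rfl
    · exact absurd (hiq ▸ h) hm
    obtain rfl := hσ.eq_of_dvd_sub hk hi hj (hiq ▸ dvd_rfl) (by rwa [← hPq])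
    exact hmi
  by_cases hiP : σ i = P
  · rw [hiP, Equiv.swap_apply_right] at hmi
    exact absurd (hmi.trans (hiP ▸ hqP)) hm
  rw [Equiv.swap_apply_of_ne_of_ne hiq hiP] at hmi
  exact absurd hmi hm

end IsWCS

theorem prime_power_swap_is_wcs (k : ℕ) (σ : ℕ → ℕ) (hσ : IsWCS k σ)
    (p c : ℕ) (hp : p.Prime) (hc : 1 ≤ c)
    (hlow : p ^ c ≤ k) (hhigh : k < p ^ c + p ^ (c - 1)) :
    IsWCS k (fun i =>
      if σ i = p ^ (c - 1) then p ^ c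
      else if σ i = p ^ c then p ^ (c - 1) else σ i) := by
  obtain ⟨d, rfl⟩ : ∃ d, c = d + 1 := ⟨c - 1, by omega⟩
  rw [Nat.add_sub_cancel] at hhigh ⊢
  convert hσ.swap_prime_pow hp hlow hhigh using 1
  funext i
  simp only [Function.comp_apply, Equiv.swap_apply_def]
end

section
/- Let p, p + 2, and 2p + 1 all be prime, let k = 2p - 1, and let σ be a weakly consecutive permutation of [k]. Suppose q and q + 2 are both prime with ⌈k/2⌉ < q ≤ k, σ(q - 2) = q, and σ(q) = q + 2. Then the permutation obtained from σ by setting the value at q - 2 to q + 2 and at q to q (and unchanged elsewhere) is weakly consecutive. -/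
theorem twin_prime_swap_is_wcs (p k : ℕ) (hp : p.Prime) (hp2 : (p + 2).Prime)
    (hsg : (2 * p + 1).Prime) (hk : k = 2 * p - 1)
    (σ : ℕ → ℕ) (hσ : IsWCS k σ)
    (q : ℕ) (hq : q.Prime) (hq2 : (q + 2).Prime)
    (hqlow : (k + 1) / 2 < q) (hqhigh : q ≤ k)
    (hpos1 : σ (q - 2) = q) (hpos2 : σ q = q + 2) :
    IsWCS k (fun i => if i = q - 2 then q + 2 else if i = q then q else σ i) := by
  obtain ⟨hbij, hdvd⟩ := hσ
  have hp2' : 2 ≤ p := hp.two_le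
  have hpq : p < q := by omega
  have hq3 : 3 ≤ q := by omega
  have hqmem : q ∈ Set.Icc 1 k := Set.mem_Icc.mpr ⟨by omega, hqhigh⟩
  have hq2k : q + 2 ≤ k := by
    have := hbij.mapsTo hqmem
    rw [hpos2] at this
    exact (Set.mem_Icc.mp this).2
  have hqm2mem : (q - 2) ∈ Set.Icc 1 k := Set.mem_Icc.mpr ⟨by omega, by omega⟩
  have h2q : k < 2 * q := by omega
  -- unique multiples of q in [1,k]
  have huq : ∀ n, 1 ≤ n → n ≤ k → q ∣ n → n = q := by
    intro n h1 h2 hd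
    obtain ⟨c, rfl⟩ := hd
    have hc0 : c ≠ 0 := by rintro rfl; simp at h1
    have hc2 : c < 2 := by
      by_contra h
      push_neg at h
      have : q * 2 ≤ q * c := Nat.mul_le_mul_left q h
      omega
    have : c = 1 := by omega
    subst this; ring
  have huq2 : ∀ n, 1 ≤ n → n ≤ k → (q + 2) ∣ n → n = q + 2 := by
    intro n h1 h2 hd
    obtain ⟨c, rfl⟩ := hd
    have hc0 : c ≠ 0 := by rintro rfl; simp at h1
    have hc2 : c < 2 := by
      by_contra h
      push_neg at h
      have : (q + 2) * 2 ≤ (q + 2) * c := Nat.mul_le_mul_left _ h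
      omega
    have : c = 1 := by omega
    subst this; ring
  constructor
  · -- bijection part: the new map agrees with (swap q (q+2)) ∘ σ on [1,k]
    have heq : Set.EqOn ((Equiv.swap q (q + 2) : ℕ → ℕ) ∘ σ)
        (fun i => if i = q - 2 then q + 2 else if i = q then q else σ i)
        (Set.Icc 1 k) := by
      intro i hi
      by_cases h1 : i = q - 2
      · subst h1
        simp [hpos1]
      · by_cases h2 : i = q
        · subst h2
          simp [h1, hpos2]
        · have hne1 : σ i ≠ q := fun h => h1 (hbij.injOn hi hqm2mem (h.trans hpos1.symm))
          have hne2 : σ i ≠ q + 2 := fun h => h2 (hbij.injOn hi hqmem (h.trans hpos2.symm))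
          simp [h1, h2, Equiv.swap_apply_of_ne_of_ne hne1 hne2]
    have hswapbij : Set.BijOn (Equiv.swap q (q + 2) : ℕ → ℕ) (Set.Icc 1 k) (Set.Icc 1 k) := by
      refine ⟨?_, (Equiv.injective _).injOn, ?_⟩
      · intro x hx
        rcases Set.mem_Icc.mp hx with ⟨hx1, hx2⟩
        rw [Equiv.swap_apply_def]
        split_ifs <;> exact Set.mem_Icc.mpr ⟨by omega, by omega⟩
      · intro y hy
        rcases Set.mem_Icc.mp hy with ⟨hy1, hy2⟩
        refine ⟨Equiv.swap q (q + 2) y, ?_, by simp⟩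
        rw [Equiv.swap_apply_def]
        split_ifs <;> exact Set.mem_Icc.mpr ⟨by omega, by omega⟩
    exact (hswapbij.comp hbij).congr heq
  · intro m i j hi hj hmi hmij
    rcases Set.mem_Icc.mp hi with ⟨hi1, hi2⟩
    rcases Set.mem_Icc.mp hj with ⟨hj1, hj2⟩
    simp only at hmi ⊢
    by_cases hiq2 : i = q - 2
    · rw [if_pos hiq2] at hmi
      rcases (hq2.eq_one_or_self_of_dvd m hmi) with rfl | hm
      · simp
      · -- m = q + 2 divides i - j with i = q - 2; forces j = i
        have hji : (j : ℤ) = (i : ℤ) := by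
          have h0 : (i : ℤ) - (j : ℤ) = 0 := by
            refine Int.eq_zero_of_dvd_of_natAbs_lt_natAbs hmij ?_
            simp only [Int.natAbs_natCast]
            omega
          linarith
        have hj' : j = i := by exact_mod_cast hji
        rw [hj', if_pos hiq2]; exact hm ▸ dvd_refl m
    · by_cases hiq : i = q
      · rw [if_neg hiq2, if_pos hiq] at hmi
        rcases (hq.eq_one_or_self_of_dvd m hmi) with rfl | hm
        · simp
        · have hji : (j : ℤ) = (i : ℤ) := by
            have h0 : (i : ℤ) - (j : ℤ) = 0 := by
              refine Int.eq_zero_of_dvd_of_natAbs_lt_natAbs hmij ?_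
              simp only [Int.natAbs_natCast]
              omega
            linarith
          have hj' : j = i := by exact_mod_cast hji
          rw [hj', if_neg hiq2, if_pos hiq]; exact hm ▸ dvd_refl m
      · rw [if_neg hiq2, if_neg hiq] at hmi
        by_cases hjq2 : j = q - 2
        · rw [if_pos hjq2]
          have hmq : m ∣ q := by
            have := hdvd m i (q - 2) hi hqm2mem hmi (by rw [← hjq2]; exact hmij)
            rwa [hpos1] at this
          rcases (hq.eq_one_or_self_of_dvd m hmq) with rfl | hm
          · simp
          · exfalso
            have hσi : σ i ∈ Set.Icc 1 k := hbij.mapsTo hi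
            rcases Set.mem_Icc.mp hσi with ⟨h1, h2⟩
            have : σ i = q := huq _ h1 h2 (hm ▸ hmi)
            exact hiq2 (hbij.injOn hi hqm2mem (this.trans hpos1.symm))
        · by_cases hjq : j = q
          · rw [if_neg hjq2, if_pos hjq]
            have hmq : m ∣ q + 2 := by
              have := hdvd m i q hi hqmem hmi (by rw [← hjq]; exact hmij)
              rwa [hpos2] at this
            rcases (hq2.eq_one_or_self_of_dvd m hmq) with rfl | hm
            · simp
            · exfalso
              have hσi : σ i ∈ Set.Icc 1 k := hbij.mapsTo hi
              rcases Set.mem_Icc.mp hσi with ⟨h1, h2⟩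
              have : σ i = q + 2 := huq2 _ h1 h2 (hm ▸ hmi)
              exact hiq (hbij.injOn hi hqmem (this.trans hpos2.symm))
          · rw [if_neg hjq2, if_neg hjq]
            exact hdvd m i j hi hj hmi hmij
end
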